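/- Finite summation identity (equation f2b1other): For all integers N, t ≥ 0 and all a ∈ ℂ with 1 + a q^j ≠ 0 for 0 ≤ j < N + t, one has Σ_{i=0}^{N} (−1)^i q^{binom(i,2)} (q;q)_N / ((q;q)_i (q;q)_{N−i} (−a;q)_{N−i+t}) = (−1)^N a^N q^{N(N+t−1)} / (−a;q)_{N+t}, where binom(i,2) = i(i−1)/2. -/

import Mathlib

/-!
Write `b = -a` and `S(N, t) = ∑ᵢ (-1)^i q^(i choose 2) [N, i]_q / (b; q)_{N-i+t}`. Splitting
`[N+1, i]_q` by the q-Pascal rule and pairing the terms carrying `[N, j]_q`, the telescoping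
identity `1/(b; q)_{m+1} - 1/(b; q)_m = b q^m / (b; q)_{m+1}` gives
`S(N+1, t) = b q^(N+t) S(N, t+1)`.
Iterating down to `S(0, t) = 1/(b; q)_t` yields the closed form.
-/

open Finset

noncomputable def qPoch (a q : ℂ) (n : ℕ) : ℂ :=
  ∏ t ∈ Finset.range n, (1 - a * q ^ t)

noncomputable def qPochInf (a q : ℂ) : ℂ :=
  ∏' t : ℕ, (1 - a * q ^ t)

def IsBaileyPair (q a : ℂ) (α β : ℕ → ℂ) : Prop :=
  ∀ n : ℕ, β n =
    ∑ t ∈ Finset.range (n + 1), α t / (qPoch q q (n - t) * qPoch (a * q) q (n + t))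

theorem qPoch_succ (b q : ℂ) (n : ℕ) : qPoch b q (n + 1) = qPoch b q n * (1 - b * q ^ n) :=
  prod_range_succ _ _

theorem qPoch_ne_zero_iff {b q : ℂ} {n : ℕ} :
    qPoch b q n ≠ 0 ↔ ∀ j < n, 1 - b * q ^ j ≠ 0 := by
  simp [qPoch, prod_ne_zero_iff]

theorem qPoch_self_ne_zero {q : ℂ} (hq : ‖q‖ < 1) (n : ℕ) : qPoch q q n ≠ 0 := by
  refine qPoch_ne_zero_iff.mpr fun j _ => sub_ne_zero.mpr fun h => ?_
  have : ‖q‖ ^ (j + 1) < 1 := pow_lt_one₀ (norm_nonneg q) hq (Nat.succ_ne_zero j)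
  rw [← norm_pow, pow_succ', ← h, norm_one] at this
  exact lt_irrefl _ this

theorem inv_qPoch_succ_sub_inv_qPoch {b q : ℂ} {m : ℕ} (h : qPoch b q (m + 1) ≠ 0) :
    (qPoch b q (m + 1))⁻¹ - (qPoch b q m)⁻¹ = b * q ^ m / qPoch b q (m + 1) := by
  rw [qPoch_succ] at h ⊢
  have hm : qPoch b q m ≠ 0 := left_ne_zero_of_mul h
  have hlast : 1 - b * q ^ m ≠ 0 := right_ne_zero_of_mul h
  field_simp
  ring

-- Defined by the q-Pascal rule, so that it vanishes for `k > n` whatever `q` is.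
noncomputable def qBinom (q : ℂ) : ℕ → ℕ → ℂ
  | _, 0 => 1
  | 0, _ + 1 => 0
  | n + 1, k + 1 => qBinom q n k + q ^ (k + 1) * qBinom q n (k + 1)

theorem qBinom_eq_zero_of_lt {q : ℂ} : ∀ {n k : ℕ}, n < k → qBinom q n k = 0
  | 0, _ + 1, _ => rfl
  | n + 1, k + 1, h => by
    rw [qBinom, qBinom_eq_zero_of_lt (by omega), qBinom_eq_zero_of_lt (by omega)]
    ring

@[simp]
theorem qBinom_self (q : ℂ) : ∀ n : ℕ, qBinom q n n = 1
  | 0 => rfl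
  | n + 1 => by rw [qBinom, qBinom_self q n, qBinom_eq_zero_of_lt (Nat.lt_succ_self n)]; ring

theorem qBinom_mul_qPoch_mul_qPoch (q : ℂ) :
    ∀ {n k : ℕ}, k ≤ n → qBinom q n k * qPoch q q k * qPoch q q (n - k) = qPoch q q n
  | n, 0, _ => by simp [qBinom, qPoch]
  | n + 1, k + 1, h => by
    rcases (Nat.le_of_succ_le_succ h).eq_or_lt with rfl | hk
    · simp [qPoch]
    · have h₁ := qBinom_mul_qPoch_mul_qPoch q hk.le
      have h₂ := qBinom_mul_qPoch_mul_qPoch q (show k + 1 ≤ n by omega)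
      obtain ⟨d, rfl⟩ := Nat.exists_eq_add_of_lt hk
      rw [show k + d + 1 - k = d + 1 by omega] at h₁
      rw [show k + d + 1 - (k + 1) = d by omega] at h₂
      rw [show k + d + 1 + 1 - (k + 1) = d + 1 by omega, qBinom, qPoch_succ q q (k + d + 1),
        qPoch_succ q q k, qPoch_succ q q d]
      rw [qPoch_succ q q k] at h₂
      rw [qPoch_succ q q d] at h₁
      linear_combination (1 - q * q ^ k) * h₁ + q ^ (k + 1) * (1 - q * q ^ d) * h₂

theorem qBinom_eq_div {q : ℂ} (hq : ‖q‖ < 1) {n k : ℕ} (h : k ≤ n) :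
    qBinom q n k = qPoch q q n / (qPoch q q k * qPoch q q (n - k)) := by
  rw [eq_div_iff (mul_ne_zero (qPoch_self_ne_zero hq k) (qPoch_self_ne_zero hq (n - k))),
    ← mul_assoc, qBinom_mul_qPoch_mul_qPoch q h]

theorem sum_range_qBinom_succ_mul (q : ℂ) (N : ℕ) (G : ℕ → ℕ → ℂ) :
    ∑ i ∈ range (N + 2), qBinom q (N + 1) i * G i (N + 1 - i) =
      ∑ j ∈ range (N + 1), qBinom q N j * (G (j + 1) (N - j) + q ^ j * G j (N + 1 - j)) := by
  have hshift : ∑ j ∈ range (N + 1), qBinom q N j * (q ^ j * G j (N + 1 - j)) =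
      ∑ j ∈ range (N + 2), qBinom q N j * (q ^ j * G j (N + 1 - j)) := by
    rw [sum_range_succ _ (N + 1), qBinom_eq_zero_of_lt (Nat.lt_succ_self N), zero_mul, add_zero]
  simp only [mul_add, sum_add_distrib, hshift]
  rw [sum_range_succ', sum_range_succ' (fun j => qBinom q N j * (q ^ j * G j (N + 1 - j)))]
  simp only [qBinom, Nat.add_sub_add_right, add_mul, sum_add_distrib]
  ring_nf

noncomputable def alternatingQBinomSum (q b : ℂ) (N t : ℕ) : ℂ :=
  ∑ i ∈ range (N + 1), (-1) ^ i * q ^ i.choose 2 * qBinom q N i / qPoch b q (N - i + t)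

theorem alternatingQBinomSum_succ {q b : ℂ} {N t : ℕ} (h : qPoch b q (N + 1 + t) ≠ 0) :
    alternatingQBinomSum q b (N + 1) t =
      b * q ^ (N + t) * alternatingQBinomSum q b N (t + 1) := by
  let G : ℕ → ℕ → ℂ := fun i m => (-1) ^ i * q ^ i.choose 2 / qPoch b q (m + t)
  have hterm : ∀ j ∈ range (N + 1),
      qBinom q N j * (G (j + 1) (N - j) + q ^ j * G j (N + 1 - j)) =
      b * q ^ (N + t) *
        ((-1) ^ j * q ^ j.choose 2 * qBinom q N j / qPoch b q (N - j + (t + 1))) := by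
    intro j hj
    have hjN : j ≤ N := mem_range_succ_iff.mp hj
    have hD : qPoch b q (N - j + t + 1) ≠ 0 :=
      qPoch_ne_zero_iff.mpr fun i hi => qPoch_ne_zero_iff.mp h i (by omega)
    have hdiff := inv_qPoch_succ_sub_inv_qPoch hD
    simp only [G, Nat.choose_succ_succ', Nat.choose_one_right]
    rw [show N + 1 - j + t = N - j + t + 1 by omega, ← add_assoc,
      show q ^ (N + t) = q ^ j * q ^ (N - j + t) by rw [← pow_add]; congr 1; omega]
    simp only [div_eq_mul_inv] at hdiff ⊢
    linear_combination qBinom q N j * (-1) ^ j * q ^ (j.choose 2 + j) * hdiff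
  calc alternatingQBinomSum q b (N + 1) t
      = ∑ i ∈ range (N + 2), qBinom q (N + 1) i * G i (N + 1 - i) :=
        sum_congr rfl fun i _ => by simp only [G]; ring
    _ = _ := by rw [sum_range_qBinom_succ_mul, sum_congr rfl hterm, ← mul_sum]; rfl

theorem alternatingQBinomSum_eq {q b : ℂ} {N t : ℕ} (h : qPoch b q (N + t) ≠ 0) :
    alternatingQBinomSum q b N t = b ^ N * q ^ (N * (N + t - 1)) / qPoch b q (N + t) := by
  induction N generalizing t with
  | zero => simp [alternatingQBinomSum]
  | succ N ih =>
    rw [alternatingQBinomSum_succ h, ih (by rwa [← add_assoc, add_right_comm]),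
      show N + (t + 1) = N + 1 + t by omega, show N + 1 + t - 1 = N + t by omega,
      show N + 1 + t = N + t + 1 by omega]
    ring

theorem eqn_f2b1other_general (q a : ℂ) (hq1 : ‖q‖ < 1)
    (N t : ℕ) (ha : ∀ j : ℕ, j < N + t → 1 + a * q ^ j ≠ 0) :
    ∑ i ∈ Finset.range (N + 1),
      (-1 : ℂ) ^ i * q ^ (i.choose 2) * qPoch q q N /
        (qPoch q q i * qPoch q q (N - i) * qPoch (-a) q (N - i + t)) =
    (-1 : ℂ) ^ N * a ^ N * q ^ (N * (N + t - 1)) / qPoch (-a) q (N + t) := by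
  have hD : qPoch (-a) q (N + t) ≠ 0 :=
    qPoch_ne_zero_iff.mpr fun j hj => by rw [neg_mul, sub_neg_eq_add]; exact ha j hj
  calc _ = alternatingQBinomSum q (-a) N t :=
        sum_congr rfl fun i hi => by rw [qBinom_eq_div hq1 (mem_range_succ_iff.mp hi)]; ring
    _ = _ := by rw [alternatingQBinomSum_eq hD, neg_pow]

theorem eqn_f2b1other (q a : ℂ) (hq0 : 0 < ‖q‖) (hq1 : ‖q‖ < 1)
    (N t : ℕ) (ha : ∀ j : ℕ, j < N + t → 1 + a * q ^ j ≠ 0) :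
    ∑ i ∈ Finset.range (N + 1),
      (-1 : ℂ) ^ i * q ^ (i.choose 2) * qPoch q q N /
        (qPoch q q i * qPoch q q (N - i) * qPoch (-a) q (N - i + t)) =
    (-1 : ℂ) ^ N * a ^ N * q ^ (N * (N + t - 1)) / qPoch (-a) q (N + t) :=
  eqn_f2b1other_general q a hq1 N t ha
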